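/- Let n be odd and suppose there exists a Galois supplemented reversible cyclic code C ⊆ F_4^n of minimum Hamming distance at least d. Then there exists a set D ⊆ F_4^n with |D| ≥ binom(n, (n+1)/2) such that: all elements of D have the same F_2-weight; d(u, v) ≥ d for all distinct u, v ∈ D; and d(u, v^{RC}) ≥ d for all u, v ∈ D. In particular A_4^{GC,RC}(n, d) ≥ binom(n, (n+1)/2). -/
import Mathlib


open Polynomial

/-- The polynomial of degree `< n` whose coefficient vector is the word `u`. -/
noncomputable def wordPoly {F : Type*} [Field F] {n : ℕ} (u : Fin n → F) : Polynomial F :=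
  ∑ j : Fin n, Polynomial.C (u j) * Polynomial.X ^ (j : ℕ)

/-- The `F_2`-weight of a word over `F_4`: the number of coordinates in the prime subfield
`F_2 = {x | x^2 = x}`. -/
noncomputable def f2Weight {F : Type*} [Field F] {n : ℕ} (u : Fin n → F) : ℕ :=
  Set.ncard {j : Fin n | (u j) ^ 2 = u j}

/-- The Hamming distance between two words. -/
noncomputable def hamDist {F : Type*} [Field F] {n : ℕ} (u v : Fin n → F) : ℕ :=
  Set.ncard {j : Fin n | u j ≠ v j}

/-- The reverse-complement of `v = (x_1, …, x_n)`: `v^RC = (x_n + 1, …, x_2 + 1, x_1 + 1)`. -/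
def revComp {F : Type*} [Field F] {n : ℕ} (v : Fin n → F) : Fin n → F :=
  fun i => v (Fin.rev i) + 1

lemma wordPoly_add {F : Type*} [Field F] {n : ℕ} (u v : Fin n → F) :
    wordPoly (u + v) = wordPoly u + wordPoly v := by
  simp [wordPoly, Pi.add_apply, C_add, add_mul, Finset.sum_add_distrib]

/-- if `n` is odd and there exists a Galois supplemented reversible cyclic
code `C ⊆ F_4^n` of minimum Hamming distance at least `d`, then there is a set
`D ⊆ F_4^n` of size at least `binom(n, (n+1)/2)` all of whose words have the same
`F_2`-weight, with `d(u,v) ≥ d` for distinct `u, v ∈ D` and `d(u, v^RC) ≥ d` for all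
`u, v ∈ D`; in particular `A_4^{GC,RC}(n,d) ≥ binom(n, (n+1)/2)`. -/
theorem stmt19 (n d : ℕ) (hn : 0 < n) (hodd : Odd n)
    (F : Type*) [Field F] [Fintype F] (hF : Fintype.card F = 4)
    (g : Polynomial F) (hmonic : g.Monic) (hdvd : g ∣ (Polynomial.X ^ n - 1))
    (hsupp : ∀ v : Fin n → F, ∃ a : Fin n → F, g ∣ wordPoly a ∧
      ∃ b : Fin n → F, g ∣ wordPoly b ∧ v = a + fun j => (b j) ^ 2)
    (hrev : ∀ u : Fin n → F, g ∣ wordPoly u →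
      g ∣ wordPoly (fun i => u (Fin.rev i)))
    (hdist : ∀ u v : Fin n → F, g ∣ wordPoly u → g ∣ wordPoly v → u ≠ v →
      d ≤ hamDist u v) :
    ∃ D : Set (Fin n → F),
      (n.choose ((n + 1) / 2) ≤ D.ncard) ∧
      (∃ w : ℕ, ∀ u ∈ D, f2Weight u = w) ∧
      (∀ u ∈ D, ∀ v ∈ D, u ≠ v → d ≤ hamDist u v) ∧
      (∀ u ∈ D, ∀ v ∈ D, d ≤ hamDist u (revComp v)) := by
  classical
  -- characteristic 2 facts
  have h4 : ((Fintype.card F : ℕ) : F) = 0 := FiniteField.cast_card_eq_zero F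
  rw [hF] at h4
  have h4' : (4 : F) = 0 := by exact_mod_cast h4
  have h2 : (2 : F) = 0 := by
    have h22 : (2 : F) * 2 = 4 := by norm_num
    exact mul_self_eq_zero.mp (by rw [h22]; exact h4')
  haveI : CharP F 2 := CharTwo.of_one_ne_zero_of_two_eq_zero one_ne_zero h2
  have hpow : ∀ x : F, x ^ 4 = x := by
    intro x
    have := FiniteField.pow_card x
    rwa [hF] at this
  -- an element ω with ω² ≠ ω
  have hexω : ∃ w : F, w ^ 2 ≠ w := by
    by_contra hcon
    push_neg at hcon
    have hsub : (Finset.univ : Finset F) ⊆ {0, 1} := by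
      intro x _
      have hx : x * (x - 1) = 0 := by linear_combination hcon x
      rcases mul_eq_zero.mp hx with h | h
      · simp [h]
      · simp [sub_eq_zero.mp h]
    have hle := Finset.card_le_card hsub
    rw [Finset.card_univ, hF] at hle
    have hle2 : ({0, 1} : Finset F).card ≤ 2 :=
      (Finset.card_insert_le _ _).trans (by simp)
    omega
  obtain ⟨ω, hω⟩ := hexω
  have hω0 : ω ≠ 0 := fun h => hω (by rw [h]; ring)
  have hω1 : ω ≠ 1 := fun h => hω (by rw [h]; ring)
  have hε : ω ^ 2 + ω ≠ 0 := by
    intro h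
    apply hω
    have : ω ^ 2 = -ω := by linear_combination h
    rwa [CharTwo.neg_eq] at this
  -- every element of F is one of 0, 1, ω, ω+1
  have hω2 : ω ≠ ω + 1 := by
    intro h; exact one_ne_zero (by linear_combination -h)
  have h0ω : (0 : F) ≠ ω := fun h => hω0 h.symm
  have h0ω1 : (0 : F) ≠ ω + 1 := by
    intro h; apply hω1; linear_combination -h - h2
  have h1ω : (1 : F) ≠ ω := fun h => hω1 h.symm
  have h1ω1 : (1 : F) ≠ ω + 1 := by
    intro h; exact hω0 (by linear_combination -h)
  have huniv : ({0, 1, ω, ω + 1} : Finset F) = Finset.univ := by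
    apply Finset.eq_univ_of_card
    rw [hF]
    rw [Finset.card_insert_of_notMem (by simp [zero_ne_one, h0ω, h0ω1]),
      Finset.card_insert_of_notMem (by simp [h1ω, h1ω1]),
      Finset.card_insert_of_notMem (by simp [hω2]), Finset.card_singleton]
  have hall : ∀ a : F, a = 0 ∨ a = 1 ∨ a = ω ∨ a = ω + 1 := by
    intro a
    have : a ∈ ({0, 1, ω, ω + 1} : Finset F) := huniv ▸ Finset.mem_univ a
    simpa using this
  -- evaluation of wordPoly at 1 is the coordinate sum
  have heval : ∀ x : Fin n → F, (wordPoly x).eval 1 = ∑ j, x j := by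
    intro x
    simp [wordPoly, eval_finset_sum]
  -- g(1) ≠ 0
  have hg1 : g.eval 1 ≠ 0 := by
    intro h
    obtain ⟨a, ha, b, hb, hv⟩ := hsupp (fun j => if j = (⟨0, hn⟩ : Fin n) then 1 else 0)
    have hsa : ∑ j, a j = 0 := by
      have := eval_eq_zero_of_dvd_of_eval_eq_zero ha h
      rwa [heval] at this
    have hsb : ∑ j, b j = 0 := by
      have := eval_eq_zero_of_dvd_of_eval_eq_zero hb h
      rwa [heval] at this
    have hsv : ∑ j, (if j = (⟨0, hn⟩ : Fin n) then (1 : F) else 0) = 1 := by simp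
    rw [hv] at hsv
    simp only [Pi.add_apply] at hsv
    rw [Finset.sum_add_distrib, hsa, ← CharTwo.sum_sq, hsb] at hsv
    simp at hsv
  -- the all-ones word is a codeword
  have hone : g ∣ wordPoly (fun _ : Fin n => (1 : F)) := by
    have hwp1 : wordPoly (fun _ : Fin n => (1 : F)) = ∑ i ∈ Finset.range n, (X : F[X]) ^ i := by
      rw [wordPoly]
      simp only [map_one, one_mul]
      exact Fin.sum_univ_eq_sum_range (fun i => (X : F[X]) ^ i) n
    obtain ⟨q, hq⟩ := (X_sub_C_dvd_sub_C_eval : (X - C (1 : F)) ∣ g - C (g.eval 1))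
    rw [C_1] at hq
    have hCe : (C (g.eval 1)⁻¹ : F[X]) * C (g.eval 1) = 1 := by
      rw [← C_mul, inv_mul_cancel₀ hg1, C_1]
    have hcop : IsCoprime g (X - 1 : F[X]) := by
      refine ⟨C (g.eval 1)⁻¹, -(C (g.eval 1)⁻¹ * q), ?_⟩
      linear_combination C (g.eval 1)⁻¹ * hq + hCe
    have hdS : g ∣ (∑ i ∈ Finset.range n, (X : F[X]) ^ i) * (X - 1) := by
      rw [geom_sum_mul]; exact hdvd
    rw [hwp1]
    exact hcop.dvd_of_dvd_mul_right hdS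
  -- (n : F) = 1 and the sum of the all-ones word
  have hnF : ((n : ℕ) : F) = 1 := by
    obtain ⟨k, hk⟩ := hodd
    rw [hk]; push_cast; rw [h2]; ring
  have hone_sum : ∑ _j : Fin n, (1 : F) = 1 := by
    rw [Finset.sum_const, Finset.card_univ, Fintype.card_fin, nsmul_eq_mul, mul_one, hnF]
  -- key construction: a codeword with prescribed trace pattern
  have key : ∀ S : Finset (Fin n), ∃ c : Fin n → F, g ∣ wordPoly c ∧
      ∀ j, c j ^ 2 + c j = (if j ∈ S then ω ^ 2 + ω else 0) := by
    intro S
    obtain ⟨a, ha, b, hb, hv⟩ := hsupp (fun j => if j ∈ S then ω else 0)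
    refine ⟨a + b, by rw [wordPoly_add]; exact dvd_add ha hb, ?_⟩
    intro j
    have hvj := congrFun hv j
    simp only [Pi.add_apply] at hvj ⊢
    have hif : (if j ∈ S then ω ^ 2 + ω else 0 : F)
        = (if j ∈ S then ω else 0) ^ 2 + (if j ∈ S then ω else 0) := by
      by_cases hj : j ∈ S <;> simp [hj]
    rw [hif, hvj]
    have hb4 : ((b j) ^ 2) ^ 2 = b j := by
      calc ((b j) ^ 2) ^ 2 = b j ^ 4 := by ring
      _ = b j := hpow (b j)
    rw [CharTwo.add_sq (a j) (b j), CharTwo.add_sq (a j) ((b j) ^ 2), hb4]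
    ring
  -- adjusted construction: additionally the coordinate sum is 0 or ω
  have key2 : ∀ S : Finset (Fin n), ∃ c : Fin n → F, g ∣ wordPoly c ∧
      (∀ j, c j ^ 2 + c j = (if j ∈ S then ω ^ 2 + ω else 0)) ∧
      ((∑ j, c j) = 0 ∨ (∑ j, c j) = ω) := by
    intro S
    obtain ⟨c, hcC, hcτ⟩ := key S
    by_cases hc : (∑ j, c j) = 0 ∨ (∑ j, c j) = ω
    · exact ⟨c, hcC, hcτ, hc⟩
    · push_neg at hc
      refine ⟨c + (fun _ => 1), by rw [wordPoly_add]; exact dvd_add hcC hone, ?_, ?_⟩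
      · intro j
        have hτj := hcτ j
        simp only [Pi.add_apply]
        linear_combination hτj + (c j + 1) * h2
      · have hsum : ∑ j, (c + fun _ : Fin n => (1 : F)) j = (∑ j, c j) + 1 := by
          simp only [Pi.add_apply]
          rw [Finset.sum_add_distrib, hone_sum]
        rw [hsum]
        rcases hall (∑ j, c j) with h | h | h | h
        · exact absurd h hc.1
        · left; rw [h]; exact CharTwo.add_self_eq_zero 1
        · exact absurd h hc.2
        · right; rw [h, add_assoc, CharTwo.add_self_eq_zero, add_zero]
  choose uf humem huτ huμ using key2
  -- injectivity of the construction
  have hmem' : ∀ S S', uf S = uf S' → ∀ j, j ∈ S → j ∈ S' := by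
    intro S S' h j hj
    by_contra hj'
    have h1 := huτ S j
    have h2' := huτ S' j
    rw [h, if_pos hj] at h1
    rw [if_neg hj'] at h2'
    exact hε (h1.symm.trans h2')
  have hinj : Function.Injective uf := by
    intro S S' h
    ext j
    exact ⟨hmem' S S' h j, hmem' S' S h.symm j⟩
  -- the set D
  refine ⟨uf '' {S : Finset (Fin n) | S.card = (n + 1) / 2}, ?_, ?_, ?_, ?_⟩
  · -- cardinality
    rw [Set.ncard_image_of_injective _ hinj]
    have hTcoe : {S : Finset (Fin n) | S.card = (n + 1) / 2}
        = ↑(Finset.powersetCard ((n + 1) / 2) (Finset.univ : Finset (Fin n))) := by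
      ext S
      simp [Finset.mem_powersetCard]
    rw [hTcoe, Set.ncard_coe_finset, Finset.card_powersetCard, Finset.card_univ,
      Fintype.card_fin]
  · -- constant F₂-weight
    refine ⟨n - (n + 1) / 2, ?_⟩
    rintro u ⟨S, hS, rfl⟩
    have hτeq : ∀ j, ((uf S j) ^ 2 = uf S j) ↔ j ∉ S := by
      intro j
      constructor
      · intro hx hj
        have h1 := huτ S j
        rw [if_pos hj] at h1
        apply hε
        rw [← h1, hx, CharTwo.add_self_eq_zero]
      · intro hj
        have h1 := huτ S j
        rw [if_neg hj] at h1
        have hx : (uf S j) ^ 2 = -(uf S j) := by linear_combination h1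
        rwa [CharTwo.neg_eq] at hx
    have hset : {j : Fin n | (uf S j) ^ 2 = uf S j} = ↑(Sᶜ) := by
      ext j
      simp [hτeq j]
    simp only [f2Weight]
    rw [hset, Set.ncard_coe_finset, Finset.card_compl, Fintype.card_fin, hS]
  · -- pairwise distance
    rintro u ⟨S, _, rfl⟩ v ⟨S', _, rfl⟩ hne
    exact hdist _ _ (humem S) (humem S') hne
  · -- reverse-complement distance
    rintro u ⟨S, _, rfl⟩ v ⟨S', _, rfl⟩
    have hrc_eq : revComp (uf S') = (fun i => uf S' (Fin.rev i)) + (fun _ => (1 : F)) := by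
      funext i
      simp [revComp]
    have hrcC : g ∣ wordPoly (revComp (uf S')) := by
      rw [hrc_eq, wordPoly_add]
      exact dvd_add (hrev _ (humem S')) hone
    refine hdist _ _ (humem S) hrcC ?_
    intro heq
    have e1 : ∑ j, uf S' (Fin.rev j) = ∑ j, uf S' j :=
      Fintype.sum_bijective Fin.rev Fin.rev_involutive.bijective _ _ fun x => rfl
    have h6 : ∑ j, revComp (uf S') j = (∑ j, uf S' j) + 1 := by
      calc ∑ j, revComp (uf S') j = ∑ j, (uf S' (Fin.rev j) + 1) := rfl
      _ = (∑ j, uf S' (Fin.rev j)) + ∑ _j : Fin n, (1 : F) := Finset.sum_add_distrib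
      _ = (∑ j, uf S' j) + 1 := by rw [e1, hone_sum]
    have h7 : ∑ j, uf S j = (∑ j, uf S' j) + 1 := by
      rw [heq]; exact h6
    rcases huμ S with h1 | h1 <;> rcases huμ S' with h2' | h2' <;> rw [h1, h2'] at h7
    · exact one_ne_zero (α := F) (by linear_combination -h7)
    · exact hω1 (by linear_combination -h7 - h2)
    · exact hω1 (by linear_combination h7)
    · exact one_ne_zero (α := F) (by linear_combination -h7)
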